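/- Let s₁, s₂ be complex numbers, set s₃ := −s₁−s₂, x := −(s₁s₂+s₂s₃+s₃s₁), y := −s₁s₂s₃, assume x ≠ 0 and set a := y/x. Let σ be a complex number with |x|·|σ−a| < |σ|³. Then σ ≠ sᵢ for i = 1,2,3, the series Σ_{n=1}^{∞} (2σ−3a)·(σ−a)^{n−1}·xⁿ/σ^{3n} converges absolutely, and s₁/(σ−s₁) + s₂/(σ−s₂) + s₃/(σ−s₃) = Σ_{n=1}^{∞} (2σ−3a)·(σ−a)^{n−1}·xⁿ/σ^{3n}. In particular, the coefficient of xⁿ is a polynomial of degree n in a. -/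

import Mathlib

/-- With s₃ := −s₁−s₂, x := −(s₁s₂+s₂s₃+s₃s₁) ≠ 0, y := −s₁s₂s₃,
a := y/x, and σ satisfying |x||σ−a| < |σ|³, one has σ ≠ sᵢ, the series
Σ_{n≥1} (2σ−3a)(σ−a)^{n−1}xⁿ/σ^{3n} converges absolutely, and the CSDR kernel
Σᵢ sᵢ/(σ−sᵢ) equals its sum. -/
theorem stmt_14 (s₁ s₂ σ s₃ x y a : ℂ)
    (hs₃ : s₃ = -s₁ - s₂)
    (hx : x = -(s₁ * s₂ + s₂ * s₃ + s₃ * s₁))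
    (hy : y = -(s₁ * s₂ * s₃))
    (hx0 : x ≠ 0) (ha : a = y / x)
    (hσ : ‖x‖ * ‖σ - a‖ < ‖σ‖ ^ 3) :
    (σ ≠ s₁ ∧ σ ≠ s₂ ∧ σ ≠ s₃) ∧
    Summable (fun n : ℕ =>
      ‖(2 * σ - 3 * a) * (σ - a) ^ n * x ^ (n + 1) / σ ^ (3 * (n + 1))‖) ∧
    s₁ / (σ - s₁) + s₂ / (σ - s₂) + s₃ / (σ - s₃)
      = ∑' n : ℕ, (2 * σ - 3 * a) * (σ - a) ^ n * x ^ (n + 1) / σ ^ (3 * (n + 1)) := by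
  have hnn : 0 ≤ ‖x‖ * ‖σ - a‖ := by positivity
  have hσ0 : σ ≠ 0 := by
    rintro rfl
    simp only [norm_zero] at hσ
    nlinarith
  have hax : a * x = y := by rw [ha]; field_simp
  have habs : ‖(σ - a) * x‖ < ‖σ ^ 3‖ := by
    rw [norm_mul, norm_pow, mul_comm]; exact hσ
  have hD : σ ^ 3 - (σ - a) * x ≠ 0 := by
    intro h
    have h' : σ ^ 3 = (σ - a) * x := by linear_combination h
    rw [h'] at habs
    exact lt_irrefl _ habs
  have hDfac : σ ^ 3 - (σ - a) * x = (σ - s₁) * (σ - s₂) * (σ - s₃) := by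
    have h0 : σ ^ 3 - σ * x + y = (σ - s₁) * (σ - s₂) * (σ - s₃) := by
      subst hs₃ hx hy; ring
    linear_combination h0 + hax
  have key : s₁ * (σ - s₂) * (σ - s₃) + s₂ * (σ - s₁) * (σ - s₃)
      + s₃ * (σ - s₁) * (σ - s₂) = (2 * σ - 3 * a) * x := by
    subst hs₃ hx hy
    linear_combination 3 * hax
  have h1 : σ - s₁ ≠ 0 := fun h => hD (by rw [hDfac, h]; ring)
  have h2 : σ - s₂ ≠ 0 := fun h => hD (by rw [hDfac, h]; ring)
  have h3 : σ - s₃ ≠ 0 := fun h => hD (by rw [hDfac, h]; ring)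
  have hσ3 : (σ : ℂ) ^ 3 ≠ 0 := pow_ne_zero 3 hσ0
  have hr : ‖(σ - a) * x / σ ^ 3‖ < 1 := by
    rw [norm_div, div_lt_one (by simpa using norm_pos_iff.mpr hσ3)]
    exact habs
  set C : ℂ := (2 * σ - 3 * a) * x / σ ^ 3 with hC
  set r : ℂ := (σ - a) * x / σ ^ 3 with hr'
  have hterm : ∀ n : ℕ,
      (2 * σ - 3 * a) * (σ - a) ^ n * x ^ (n + 1) / σ ^ (3 * (n + 1))
        = C * r ^ n := by
    intro n
    rw [hC, hr', pow_mul, div_pow, mul_pow]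
    field_simp
    ring
  have hsum : Summable fun n : ℕ => ‖C * r ^ n‖ := by
    have := (summable_geometric_of_lt_one (norm_nonneg r) hr).mul_left ‖C‖
    refine this.congr fun n => ?_
    rw [norm_mul, norm_pow]
  have h1r : (1 : ℂ) - r ≠ 0 := by
    intro h
    apply hD
    have hr1 : r = 1 := by linear_combination -h
    rw [hr'] at hr1
    field_simp at hr1
    linear_combination -hr1
  refine ⟨⟨fun h => h1 (by rw [h]; ring), fun h => h2 (by rw [h]; ring),
      fun h => h3 (by rw [h]; ring)⟩, ?_, ?_⟩
  · refine hsum.congr fun n => ?_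
    rw [hterm]
  · have htsum : ∑' n : ℕ, (2 * σ - 3 * a) * (σ - a) ^ n * x ^ (n + 1) / σ ^ (3 * (n + 1))
        = C * (1 - r)⁻¹ := by
      rw [tsum_congr hterm, tsum_mul_left, tsum_geometric_of_norm_lt_one hr]
    have h1rr : 1 - r = (σ ^ 3 - (σ - a) * x) / σ ^ 3 := by
      rw [hr']; field_simp
    have hRHS : C * (1 - r)⁻¹ = (2 * σ - 3 * a) * x / (σ ^ 3 - (σ - a) * x) := by
      rw [hC, h1rr, inv_div]
      field_simp
    rw [htsum, hRHS, hDfac]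
    rw [div_add_div _ _ h1 h2, div_add_div _ _ (mul_ne_zero h1 h2) h3,
      div_eq_div_iff (mul_ne_zero (mul_ne_zero h1 h2) h3)
        (mul_ne_zero (mul_ne_zero h1 h2) h3)]
    linear_combination ((σ - s₁) * (σ - s₂) * (σ - s₃)) * key
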